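/- arXiv:1803.06463 — 3 statements merged into one kernel-verified Lean document; each statement's English description precedes it below -/
import Mathlib

section
/- Let N ≥ 2 and M = (m_{i,j}) ∈ M(N,r). Then the minimal double coset representative d_M equals the column-by-column product d_M = (w_{2,1} w_{3,1} ⋯ w_{N,1})(w_{2,2} w_{3,2} ⋯ w_{N,2}) ⋯ (w_{2,N−1} w_{3,N−1} ⋯ w_{N,N−1}), and this expression is reduced; in particular, ℓ(d_M) = Σ_{i=1}^{N} Σ_{j=1}^{N} m_{i,j} · ( Σ_{k<i, l>j} m_{k,l} ). -/
open Equiv Finset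

/-- The simple transposition `s i = (i, i+1)` (1-based) in the symmetric group `W` on
`{1, …, r}`, realised as `Equiv.Perm (Fin r)`, where the point `x : Fin r` carries the
label `x.val + 1`.  For `i` outside the range `1 ≤ i < r` we set `s i = 1`. -/
def sT (r : ℕ) (i : ℕ) : Equiv.Perm (Fin r) :=
  if h : 1 ≤ i ∧ i < r then Equiv.swap ⟨i - 1, by omega⟩ ⟨i, h.2⟩ else 1

/-- The ascending product `s_a · s_{a+1} ⋯ s_{a+n-1}` (equal to `1` when `n = 0`);
the rightmost factor acts first. -/
def ascProd (r a n : ℕ) : Equiv.Perm (Fin r) :=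
  ((List.range n).map (fun t => sT r (a + t))).prod

/-- The descending product `s_b · s_{b-1} ⋯ s_{b-n+1}` (equal to `1` when `n = 0`);
the rightmost factor acts first. -/
def descProd (r b n : ℕ) : Equiv.Perm (Fin r) :=
  ((List.range n).map (fun t => sT r (b - t))).prod

/-- The Coxeter length `ℓ(w)`, i.e. the number of inversions of `w`. -/
def clen {r : ℕ} (w : Equiv.Perm (Fin r)) : ℕ :=
  (Finset.univ.filter (fun p : Fin r × Fin r => p.1 < p.2 ∧ w p.2 < w p.1)).card

/-- `ptil lam i` is the partial sum `λ̃_i = λ_1 + ⋯ + λ_i` (1-based `i`). -/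
def ptil {N : ℕ} (lam : Fin N → ℕ) (i : ℕ) : ℕ :=
  ∑ l : Fin N, if l.val + 1 ≤ i then lam l else 0

/-- The block `N_i^λ = {λ̃_{i-1}+1, …, λ̃_i}` (1-based `i`), as a set of points of `Fin r`
(the point `x` has label `x.val + 1`). -/
def blockSet (r : ℕ) {N : ℕ} (lam : Fin N → ℕ) (i : ℕ) : Finset (Fin r) :=
  Finset.univ.filter (fun x => ptil lam (i - 1) ≤ x.val ∧ x.val < ptil lam i)

/-- The index of the block of `λ` containing the point `x`. -/
def blockOf {r N : ℕ} (lam : Fin N → ℕ) (x : Fin r) : ℕ :=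
  ((Finset.range N).filter (fun i => ptil lam (i + 1) ≤ x.val)).card

/-- The Young subgroup `W_λ`: all permutations stabilizing each block `N_i^λ`. -/
def young (r : ℕ) {N : ℕ} (lam : Fin N → ℕ) : Subgroup (Equiv.Perm (Fin r)) where
  carrier := {w | ∀ x : Fin r, blockOf lam (w x) = blockOf lam x}
  one_mem' := by intro x; rfl
  mul_mem' := by
    intro a b ha hb x
    have h := (ha (b x)).trans (hb x)
    simpa [Equiv.Perm.mul_apply] using h
  inv_mem' := by
    intro a ha x
    have h := ha (a⁻¹ x)
    simpa using h.symm

/-- The double coset `W_λ d W_μ`, as a set of permutations. -/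
def dcoset (r : ℕ) {N : ℕ} (lam mu : Fin N → ℕ) (d : Equiv.Perm (Fin r)) :
    Set (Equiv.Perm (Fin r)) :=
  {w | ∃ x ∈ young r lam, ∃ y ∈ young r mu, w = x * d * y}

/-- `d ∈ 𝒟_{λμ}`: `d` has minimal length in its double coset `W_λ d W_μ`. -/
def isMinRep (r : ℕ) {N : ℕ} (lam mu : Fin N → ℕ) (d : Equiv.Perm (Fin r)) : Prop :=
  ∀ w ∈ dcoset r lam mu d, clen d ≤ clen w

/-- The composition `ro M` of row sums of a matrix. -/
def rowSums {N : ℕ} (M : Fin N → Fin N → ℕ) : Fin N → ℕ := fun i => ∑ j, M i j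

/-- The composition `co M` of column sums of a matrix. -/
def colSums {N : ℕ} (M : Fin N → Fin N → ℕ) : Fin N → ℕ := fun j => ∑ i, M i j

/-- `d` is the distinguished double coset representative `d_M` attached to the matrix `M`:
`d` is the minimal length element in its `(W_{ro M}, W_{co M})` double coset, and
`|N_i^{ro M} ∩ d(N_j^{co M})| = m_{i,j}` for all `i, j`. -/
def isDM (r : ℕ) {N : ℕ} (M : Fin N → Fin N → ℕ) (d : Equiv.Perm (Fin r)) : Prop :=
  isMinRep r (rowSums M) (colSums M) d ∧
    ∀ i j : Fin N,
      ((blockSet r (rowSums M) (i.val + 1)) ∩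
        (blockSet r (colSums M) (j.val + 1)).image d).card = M i j

/-- The `(i,j)` entry of `M` with 1-based indices (`0` outside the range). -/
def ent {N : ℕ} (M : Fin N → Fin N → ℕ) (i j : ℕ) : ℕ :=
  if h : 1 ≤ i ∧ i ≤ N ∧ 1 ≤ j ∧ j ≤ N then M ⟨i - 1, by omega⟩ ⟨j - 1, by omega⟩ else 0

/-- `μ̃_{j-1}` for `μ = co M`: the sum of the first `j - 1` column sums of `M`. -/
def colPS {N : ℕ} (M : Fin N → Fin N → ℕ) (j : ℕ) : ℕ :=
  ∑ p : Fin N × Fin N, if p.2.val + 1 < j then M p.1 p.2 else 0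

/-- `σ_{i,j} = μ̃_{j-1} + Σ_{k ≤ i, l ≥ j} m_{k,l}` (1-based `i, j`). -/
def sigmaS {N : ℕ} (M : Fin N → Fin N → ℕ) (i j : ℕ) : ℕ :=
  colPS M j + ∑ p : Fin N × Fin N, if p.1.val + 1 ≤ i ∧ j ≤ p.2.val + 1 then M p.1 p.2 else 0

/-- `m̃_{i,j} = μ̃_{j-1} + Σ_{h ≤ i} m_{h,j}` (1-based `i, j`): the partial sum of the
column-reading sequence of `M` up to the entry `(i, j)`. -/
def mtil {N : ℕ} (M : Fin N → Fin N → ℕ) (i j : ℕ) : ℕ :=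
  colPS M j + ∑ p : Fin N × Fin N, if p.1.val + 1 ≤ i ∧ p.2.val + 1 = j then M p.1 p.2 else 0

/-- The element `w_{i,j}` (1-based `i, j`):
`w_{i,j} = (s_{σ_{i-1,j}} ⋯ s_{m̃_{i-1,j}+1})(s_{σ_{i-1,j}+1} ⋯ s_{m̃_{i-1,j}+2}) ⋯
(s_{σ_{i-1,j}+m_{i,j}-1} ⋯ s_{m̃_{i,j}})`, with `w_{i,j} = 1` when `m_{i,j} = 0` or
`σ_{i-1,j} = m̃_{i-1,j}`. -/
def wE (r : ℕ) {N : ℕ} (M : Fin N → Fin N → ℕ) (i j : ℕ) : Equiv.Perm (Fin r) :=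
  ((List.range (ent M i j)).map
    (fun x => descProd r (sigmaS M (i - 1) j + x) (sigmaS M (i - 1) j - mtil M (i - 1) j))).prod

/-- The column product `w_{2,j} w_{3,j} ⋯ w_{N,j}`. -/
def colProd (r : ℕ) {N : ℕ} (M : Fin N → Fin N → ℕ) (j : ℕ) : Equiv.Perm (Fin r) :=
  ((List.range (N - 1)).map (fun t => wE r M (t + 2) j)).prod

/-- `Π_t`: the product of the first `t` column products
`(w_{2,1} ⋯ w_{N,1})(w_{2,2} ⋯ w_{N,2}) ⋯ (w_{2,t} ⋯ w_{N,t})`. -/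
def piProd (r : ℕ) {N : ℕ} (M : Fin N → Fin N → ℕ) (t : ℕ) : Equiv.Perm (Fin r) :=
  ((List.range t).map (fun c => colProd r M (c + 1))).prod

/-!
Number the points `0, …, r - 1` and cut each column block `N_j^{co M}` into consecutive cells of
sizes `m_{1,j}, …, m_{N,j}`; `rowMajor` lists these cells row by row, keeping the order inside
each cell. A permutation `w` with `|N_i^{ro M} ∩ w(N_j^{co M})| = m_{i,j}` inverts every pair
`x < y` for which `x` lies in an earlier column block than `y` and `w y` in an earlier row block
than `w x`. There are `Σ m_{i,j} Σ_{k<i, l>j} m_{k,l}` such pairs, `rowMajor` inverts no others,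
and it lies in the double coset of `w`. Hence the minimal `d_M` inverts exactly the forced pairs,
so it increases on every column block and on every preimage of a row block, which pins it down
as `rowMajor`.

For the factorization, multiply the factors of `Π_{N-1}` one at a time, keeping the invariant
that the partial product agrees with `rowMajor` below some point `a` and increases from `a` on.
The next factor of `w_{i,j}` is a cycle made of `σ_{i-1,j} - m̃_{i-1,j}` adjacent transpositions,
and this is exactly the number of later points that `rowMajor` puts before `a`; so the factor
moves the right point into position `a` and preserves the invariant.
-/

namespace Tuple

variable {n : ℕ} {β : Type*} [LinearOrder β] {f : Fin n → β}

theorem sort_inv_lt_sort_inv_iff (hf : Function.Injective f) (x y : Fin n) :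
    (Tuple.sort f)⁻¹ x < (Tuple.sort f)⁻¹ y ↔ f x < f y := by
  have hs : StrictMono (f ∘ Tuple.sort f) :=
    (Tuple.monotone_sort f).strictMono_of_injective (hf.comp (Tuple.sort f).injective)
  rw [← hs.lt_iff_lt]
  simp

theorem eq_sort_inv_of_lt (hf : Function.Injective f) {w : Perm (Fin n)}
    (hw : ∀ x y, f x < f y → w x < w y) : w = (Tuple.sort f)⁻¹ := by
  have hs : StrictMono (w ∘ Tuple.sort f) := fun a b hab => hw _ _ <|
    (Tuple.monotone_sort f).strictMono_of_injective (hf.comp (Tuple.sort f).injective) hab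
  have hid := hs.eq_id
  exact Equiv.ext fun x => by simpa using congrFun hid ((Tuple.sort f)⁻¹ x)

end Tuple

namespace MatrixDoubleCoset

section BlockIndex

/-- The index `i < N` of the block `[t i, t (i + 1))` containing `a`, for monotone `t`. -/
def blockIdx (t : ℕ → ℕ) (N a : ℕ) : ℕ :=
  #{k ∈ range N | t (k + 1) ≤ a}

variable {t : ℕ → ℕ} {N a : ℕ}

theorem blockIdx_mono {b : ℕ} (h : a ≤ b) : blockIdx t N a ≤ blockIdx t N b :=
  card_le_card fun k hk => by
    rw [mem_filter] at hk ⊢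
    exact ⟨hk.1, hk.2.trans h⟩

theorem blockIdx_eq (ht : Monotone t) {i : ℕ} (hi : i < N) (h1 : t i ≤ a)
    (h2 : a < t (i + 1)) : blockIdx t N a = i := by
  have : {k ∈ range N | t (k + 1) ≤ a} = range i := by
    ext k
    simp only [mem_filter, mem_range]
    constructor
    · rintro ⟨-, hk⟩
      by_contra! hik
      exact absurd (ht (by omega : i + 1 ≤ k + 1)) (by omega)
    · intro hk
      exact ⟨by omega, (ht hk).trans h1⟩
  rw [blockIdx, this, card_range]

theorem blockIdx_spec (ht : Monotone t) (h0 : t 0 ≤ a) (hN : a < t N) :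
    blockIdx t N a < N ∧ t (blockIdx t N a) ≤ a ∧ a < t (blockIdx t N a + 1) := by
  obtain ⟨i, hi, h1, h2⟩ : ∃ i < N, t i ≤ a ∧ a < t (i + 1) := by
    induction N with
    | zero => omega
    | succ n ih =>
      by_cases h : t n ≤ a
      · exact ⟨n, by omega, h, hN⟩
      · obtain ⟨i, hi, h1, h2⟩ := ih (not_le.mp h)
        exact ⟨i, by omega, h1, h2⟩
  rw [blockIdx_eq ht hi h1 h2]
  exact ⟨hi, h1, h2⟩

end BlockIndex

section Counting

theorem card_filter_val_mem_Ico {r A B : ℕ} (hB : B ≤ r) :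
    #{z : Fin r | A ≤ z.val ∧ z.val < B} = B - A := by
  rw [← Nat.card_Ico A B]
  refine card_bij (fun z _ => z.val) (fun z hz => by simpa using (mem_filter.mp hz).2)
    (fun _ _ _ _ h => Fin.ext h) fun b hb => ?_
  rw [Finset.mem_Ico] at hb
  exact ⟨⟨b, by omega⟩, by simpa using hb, rfl⟩

theorem mem_iff_of_downwardClosed {r a : ℕ} {S : Finset (Fin r)} (hge : ∀ y ∈ S, a ≤ y.val)
    (hdown : ∀ y ∈ S, ∀ y' : Fin r, a ≤ y'.val → y' ≤ y → y' ∈ S) (y : Fin r) :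
    y ∈ S ↔ a ≤ y.val ∧ y.val < a + #S := by
  constructor
  · intro hy
    have hsub : ({z : Fin r | a ≤ z.val ∧ z.val < y.val + 1} : Finset (Fin r)) ⊆ S :=
        fun z hz => by
      rw [mem_filter] at hz
      exact hdown y hy z hz.2.1 (Fin.le_def.mpr (by omega))
    have := card_le_card hsub
    rw [card_filter_val_mem_Ico y.isLt] at this
    exact ⟨hge y hy, by omega⟩
  · rintro ⟨h1, h2⟩
    by_contra hy
    have hsub : S ⊆ ({z : Fin r | a ≤ z.val ∧ z.val < y.val} : Finset (Fin r)) :=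
        fun z hz => by
      refine mem_filter.mpr ⟨mem_univ _, hge z hz, ?_⟩
      by_contra! hyz
      exact hy (hdown z hz y h1 (Fin.le_def.mpr hyz))
    have := card_le_card hsub
    rw [card_filter_val_mem_Ico y.isLt.le] at this
    omega

theorem exists_perm_comp_eq {α β : Type*} [Fintype α] [DecidableEq β] (f g : α → β)
    (h : ∀ b, #{x | f x = b} = #{x | g x = b}) : ∃ e : Perm α, ∀ x, f (e x) = g x :=
  ⟨Equiv.ofFiberEquiv fun b => Fintype.equivOfCardEq <| by
      simp only [Fintype.card_subtype]; exact (h b).symm,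
    Equiv.ofFiberEquiv_map _⟩

variable {α : Type*} [Fintype α] {N : ℕ} (M : Fin N → Fin N → ℕ) {R C : α → ℕ}

theorem sum_eq_sum_cells (hR : ∀ z, R z < N) (hC : ∀ z, C z < N)
    (hcount : ∀ k l : Fin N, #{z | R z = k ∧ C z = l} = M k l) (g : ℕ → ℕ → ℕ) :
    ∑ z, g (R z) (C z) = ∑ k, ∑ l, M k l * g k l := by
  rw [← sum_fiberwise_of_maps_to
    (g := fun z => ((⟨R z, hR z⟩ : Fin N), (⟨C z, hC z⟩ : Fin N))) (t := univ)
    (fun _ _ => mem_univ _), Fintype.sum_prod_type]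
  refine sum_congr rfl fun k _ => sum_congr rfl fun l _ => ?_
  have hfib : ∀ z ∈ ({z | (⟨R z, hR z⟩, ⟨C z, hC z⟩) = (k, l)} : Finset α),
      g (R z) (C z) = g k l := fun z hz => by
    simp only [mem_filter, Prod.ext_iff, Fin.ext_iff] at hz
    rw [hz.2.1, hz.2.2]
  rw [sum_congr rfl hfib, sum_const, smul_eq_mul, ← hcount k l]
  simp only [Prod.ext_iff, Fin.ext_iff]

theorem card_filter_eq_sum_cells (hR : ∀ z, R z < N) (hC : ∀ z, C z < N)
    (hcount : ∀ k l : Fin N, #{z | R z = k ∧ C z = l} = M k l)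
    (Q : ℕ → ℕ → Prop) [DecidableRel Q] :
    #{z | Q (R z) (C z)} = ∑ k : Fin N, ∑ l : Fin N, if Q k l then M k l else 0 := by
  rw [card_filter, sum_eq_sum_cells M hR hC hcount fun a b => if Q a b then 1 else 0]
  simp only [mul_ite, mul_one, mul_zero]

end Counting

section PartialSums

variable {N r : ℕ} (M : Fin N → Fin N → ℕ)

theorem ptil_mono (lam : Fin N → ℕ) : Monotone (ptil lam) := fun _ _ hij =>
  sum_le_sum fun l _ => by split_ifs <;> omega

theorem ptil_zero (lam : Fin N → ℕ) : ptil lam 0 = 0 :=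
  sum_eq_zero fun _ _ => if_neg (by omega)

theorem ptil_self (lam : Fin N → ℕ) : ptil lam N = ∑ l, lam l :=
  sum_congr rfl fun l _ => if_pos (by omega)

theorem ptil_colSums_self (hMr : ∑ i, ∑ j, M i j = r) : ptil (colSums M) N = r := by
  rw [ptil_self, ← hMr, sum_comm]
  rfl

theorem ptil_rowSums_self (hMr : ∑ i, ∑ j, M i j = r) : ptil (rowSums M) N = r := by
  rw [ptil_self, ← hMr]
  rfl

theorem sum_rows_lt_eq_ptil (i : ℕ) :
    ∑ k : Fin N, ∑ l : Fin N, (if k.val < i then M k l else 0) = ptil (rowSums M) i :=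
  sum_congr rfl fun k _ => by
    by_cases h : k.val < i
    · simp only [h, if_true, rowSums, show k.val + 1 ≤ i by omega]
    · simp only [h, if_false, sum_const_zero, show ¬k.val + 1 ≤ i by omega]

theorem mtil_mono (j : ℕ) : Monotone fun i => mtil M i j := fun _ _ hii =>
  Nat.add_le_add_left (sum_le_sum fun p _ => by split_ifs <;> omega) _

theorem mtil_zero (j : ℕ) : mtil M 0 j = colPS M j := by
  rw [mtil, sum_eq_zero fun p _ => if_neg (by omega), add_zero]

theorem colPS_succ (j : ℕ) : colPS M (j + 1) = ptil (colSums M) j := by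
  rw [colPS, Fintype.sum_prod_type, sum_comm, ptil]
  refine sum_congr rfl fun l _ => ?_
  by_cases h : l.val + 1 ≤ j
  · simp only [h, if_true, colSums]
    exact sum_congr rfl fun _ _ => if_pos (by omega)
  · simp only [h, if_false]
    exact sum_eq_zero fun _ _ => if_neg (by omega)

theorem mtil_zero_succ (j : ℕ) : mtil M 0 (j + 1) = ptil (colSums M) j := by
  rw [mtil_zero, colPS_succ]

theorem mtil_self_succ (j : ℕ) : mtil M N (j + 1) = ptil (colSums M) (j + 1) := by
  rw [mtil, ← colPS_succ, colPS, colPS, ← sum_add_distrib]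
  refine sum_congr rfl fun p _ => ?_
  have := p.1.isLt
  split_ifs <;> omega

theorem mtil_succ {i j : ℕ} (hi : i < N) (hj : j < N) :
    mtil M (i + 1) (j + 1) = mtil M i (j + 1) + M ⟨i, hi⟩ ⟨j, hj⟩ := by
  have hsplit : ∀ p : Fin N × Fin N,
      (if p.1.val + 1 ≤ i + 1 ∧ p.2.val + 1 = j + 1 then M p.1 p.2 else 0)
        = (if p.1.val + 1 ≤ i ∧ p.2.val + 1 = j + 1 then M p.1 p.2 else 0)
          + (if p = (⟨i, hi⟩, ⟨j, hj⟩) then M p.1 p.2 else 0) := fun p => by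
    simp only [Prod.ext_iff, Fin.ext_iff]
    split_ifs <;> omega
  rw [mtil, mtil, sum_congr rfl fun p _ => hsplit p, sum_add_distrib, sum_ite_eq' univ,
    if_pos (mem_univ _), add_assoc]

theorem mtil_succ_eq_ptil_add (k j : ℕ) :
    mtil M k (j + 1) = ptil (colSums M) j
      + ∑ kk : Fin N, ∑ ll : Fin N, if kk.val < k ∧ ll.val = j then M kk ll else 0 := by
  rw [mtil, colPS_succ, Fintype.sum_prod_type]
  congr 1
  refine sum_congr rfl fun _ _ => sum_congr rfl fun _ _ => if_congr ?_ rfl rfl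
  dsimp only
  omega

theorem ptil_le_mtil (i j : ℕ) : ptil (colSums M) j ≤ mtil M i (j + 1) :=
  mtil_zero_succ M j ▸ mtil_mono M _ (Nat.zero_le i)

theorem mtil_le_ptil {i : ℕ} (hi : i ≤ N) (j : ℕ) :
    mtil M i (j + 1) ≤ ptil (colSums M) (j + 1) :=
  mtil_self_succ M j ▸ mtil_mono M _ hi

theorem sigmaS_eq_mtil_add (i j : ℕ) :
    sigmaS M i (j + 1) = mtil M i (j + 1)
      + ∑ p : Fin N × Fin N, if p.1.val < i ∧ j < p.2.val then M p.1 p.2 else 0 := by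
  rw [sigmaS, mtil, add_assoc, ← sum_add_distrib]
  congr 1
  refine sum_congr rfl fun p _ => ?_
  split_ifs <;> omega

end PartialSums

section Blocks

variable {N r : ℕ}

theorem blockOf_mono (lam : Fin N → ℕ) {x y : Fin r} (h : x ≤ y) :
    blockOf lam x ≤ blockOf lam y :=
  blockIdx_mono (t := ptil lam) (Fin.le_def.mp h)

theorem blockOf_spec {lam : Fin N → ℕ} (hl : ptil lam N = r) (x : Fin r) :
    blockOf lam x < N ∧ ptil lam (blockOf lam x) ≤ x ∧ x < ptil lam (blockOf lam x + 1) :=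
  blockIdx_spec (ptil_mono lam) (by rw [ptil_zero]; omega) (hl ▸ x.isLt)

theorem blockOf_eq {lam : Fin N → ℕ} {x : Fin r} {i : ℕ} (hi : i < N) (h1 : ptil lam i ≤ x)
    (h2 : x < ptil lam (i + 1)) : blockOf lam x = i :=
  blockIdx_eq (ptil_mono lam) hi h1 h2

theorem mem_blockSet_iff {lam : Fin N → ℕ} (hl : ptil lam N = r) (i : Fin N) (z : Fin r) :
    z ∈ blockSet r lam (i.val + 1) ↔ blockOf lam z = i := by
  rw [blockSet, mem_filter, Nat.add_sub_cancel]
  constructor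
  · rintro ⟨-, h1, h2⟩
    exact blockOf_eq i.isLt h1 h2
  · rintro h
    obtain ⟨-, h1, h2⟩ := blockOf_spec hl z
    rw [h] at h1 h2
    exact ⟨mem_univ _, h1, h2⟩

end Blocks

section Cells

variable {N r : ℕ} (M : Fin N → Fin N → ℕ)

/-- Position `a` (`0`-based) of `{1, …, r}` lies in the column block `colIdx M a`; reading that
block as consecutive segments of lengths `m_{1,j}, …, m_{N,j}`, it lies in the cell
`(rowIdx M a, colIdx M a)`. -/
def colIdx (a : ℕ) : ℕ :=
  blockIdx (ptil (colSums M)) N a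

def rowIdx (a : ℕ) : ℕ :=
  blockIdx (fun i => mtil M i (colIdx M a + 1)) N a

theorem blockOf_colSums (x : Fin r) : blockOf (colSums M) x = colIdx M x := rfl

theorem colIdx_mono {a b : ℕ} (h : a ≤ b) : colIdx M a ≤ colIdx M b :=
  blockIdx_mono h

theorem rowIdx_mono {a b : ℕ} (h : a ≤ b) (hcol : colIdx M a = colIdx M b) :
    rowIdx M a ≤ rowIdx M b := by
  unfold rowIdx
  rw [hcol]
  exact blockIdx_mono h

theorem colIdx_eq {a j : ℕ} (hj : j < N) (h1 : ptil (colSums M) j ≤ a)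
    (h2 : a < ptil (colSums M) (j + 1)) : colIdx M a = j :=
  blockIdx_eq (ptil_mono _) hj h1 h2

theorem colIdx_rowIdx_of_mem_cell {a i j : ℕ} (hi : i < N) (hj : j < N)
    (h1 : mtil M i (j + 1) ≤ a) (h2 : a < mtil M (i + 1) (j + 1)) :
    colIdx M a = j ∧ rowIdx M a = i := by
  have hcol : colIdx M a = j := colIdx_eq M hj ((ptil_le_mtil M i j).trans h1)
    (h2.trans_le (mtil_le_ptil M hi j))
  refine ⟨hcol, ?_⟩
  unfold rowIdx
  rw [hcol]
  exact blockIdx_eq (mtil_mono M _) hi h1 h2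

structure CellBounds (a : ℕ) : Prop where
  colIdx_lt : colIdx M a < N
  ptil_colIdx_le : ptil (colSums M) (colIdx M a) ≤ a
  lt_ptil_colIdx : a < ptil (colSums M) (colIdx M a + 1)
  rowIdx_lt : rowIdx M a < N
  mtil_rowIdx_le : mtil M (rowIdx M a) (colIdx M a + 1) ≤ a
  lt_mtil_rowIdx : a < mtil M (rowIdx M a + 1) (colIdx M a + 1)

variable {M}

theorem cellBounds (hc : ptil (colSums M) N = r) {a : ℕ} (ha : a < r) : CellBounds M a := by
  obtain ⟨hj, hj1, hj2⟩ := blockIdx_spec (a := a) (ptil_mono (colSums M))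
    (by rw [ptil_zero]; omega) (show a < ptil (colSums M) N by omega)
  obtain ⟨hi, hi1, hi2⟩ := blockIdx_spec (a := a) (mtil_mono M (colIdx M a + 1))
    (by rw [mtil_zero_succ]; exact hj1) (by rw [mtil_self_succ]; exact hj2)
  exact ⟨hj, hj1, hj2, hi, hi1, hi2⟩

theorem card_cell (hc : ptil (colSums M) N = r) (k l : Fin N) :
    #{z : Fin r | rowIdx M z = k ∧ colIdx M z = l} = M k l := by
  have hcell : ∀ z : Fin r, rowIdx M z = k ∧ colIdx M z = l ↔
      mtil M k (l + 1) ≤ z.val ∧ z.val < mtil M (k + 1) (l + 1) := fun z => by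
    constructor
    · rintro ⟨hk, hl⟩
      have hz := cellBounds hc z.isLt
      exact ⟨hk ▸ hl ▸ hz.mtil_rowIdx_le, hk ▸ hl ▸ hz.lt_mtil_rowIdx⟩
    · rintro ⟨h1, h2⟩
      exact (colIdx_rowIdx_of_mem_cell M k.isLt l.isLt h1 h2).symm
  have hle : mtil M (k + 1) (l + 1) ≤ r :=
    hc ▸ (mtil_le_ptil M k.isLt l).trans (ptil_mono _ l.isLt)
  rw [filter_congr fun z _ => hcell z, card_filter_val_mem_Ico hle, mtil_succ M k.isLt l.isLt]
  simp

theorem card_rowIdx_lt (hc : ptil (colSums M) N = r) (i : ℕ) :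
    #{z : Fin r | rowIdx M z < i} = ptil (rowSums M) i := by
  rw [card_filter_eq_sum_cells M (fun z => (cellBounds hc z.isLt).rowIdx_lt)
    (fun z => (cellBounds hc z.isLt).colIdx_lt) (card_cell hc) fun k _ => k < i,
    sum_rows_lt_eq_ptil]

end Cells

section RowMajor

variable {N r : ℕ} (M : Fin N → Fin N → ℕ)

def key (a : ℕ) : ℕ ×ₗ ℕ ×ₗ ℕ :=
  toLex (rowIdx M a, toLex (colIdx M a, a))

theorem key_lt_key_iff {a b : ℕ} :
    key M a < key M b ↔ rowIdx M a < rowIdx M b ∨ rowIdx M a = rowIdx M b ∧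
      (colIdx M a < colIdx M b ∨ colIdx M a = colIdx M b ∧ a < b) := by
  simp only [key, Prod.Lex.toLex_lt_toLex]

theorem key_lt_key_iff_of_le {a b : ℕ} (h : a ≤ b) :
    key M b < key M a ↔ rowIdx M b < rowIdx M a ∧ colIdx M a < colIdx M b := by
  have hcol := colIdx_mono M h
  rw [key_lt_key_iff]
  constructor
  · rintro (hrow | ⟨hrow, hlt | ⟨-, hlt⟩⟩)
    · refine ⟨hrow, hcol.lt_of_ne fun heq => ?_⟩
      exact absurd (rowIdx_mono M h heq) (not_le.mpr hrow)
    · omega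
    · omega
  · exact fun h => Or.inl h.1

theorem key_injective : Function.Injective fun z : Fin r => key M z := fun _ _ h =>
  Fin.ext (congrArg (fun k => (ofLex (ofLex k).2).2) h)

def rowMajor (r : ℕ) : Perm (Fin r) :=
  (Tuple.sort fun z : Fin r => key M z)⁻¹

theorem rowMajor_lt_rowMajor_iff (x y : Fin r) :
    rowMajor M r x < rowMajor M r y ↔ key M x < key M y :=
  Tuple.sort_inv_lt_sort_inv_iff (key_injective M) x y

theorem eq_rowMajor_of_lt {w : Perm (Fin r)}
    (hw : ∀ x y : Fin r, key M x < key M y → w x < w y) :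
    w = rowMajor M r :=
  Tuple.eq_sort_inv_of_lt (key_injective M) hw

theorem val_rowMajor (z : Fin r) : (rowMajor M r z).val = #{y : Fin r | key M y < key M z} := by
  have : #{y : Fin r | key M y < key M z} = #{u : Fin r | u < rowMajor M r z} :=
    card_equiv (rowMajor M r) fun y => by simp [rowMajor_lt_rowMajor_iff]
  rw [this, filter_gt_eq_Iio, Fin.card_Iio]

end RowMajor

section DescProd

theorem val_sT_apply {r i : ℕ} (h1 : 1 ≤ i) (h2 : i < r) (x : Fin r) :
    (sT r i x).val = if x.val = i - 1 then i else if x.val = i then i - 1 else x.val := by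
  rw [sT, dif_pos ⟨h1, h2⟩, swap_apply_def]
  simp only [Fin.ext_iff, apply_ite Fin.val]

theorem descProd_succ (r b n : ℕ) : descProd r b (n + 1) = sT r b * descProd r (b - 1) n := by
  rw [descProd, descProd, List.range_succ_eq_map, List.map_cons, List.prod_cons, List.map_map,
    Nat.sub_zero]
  refine congrArg _ (congrArg List.prod (List.map_congr_left fun t _ => ?_))
  simp only [Function.comp_apply]
  congr 1
  omega

/-- `s_{a+n} ⋯ s_{a+1}` is the cycle `a ↦ a + n ↦ a + n - 1 ↦ ⋯ ↦ a` (`0`-based points). -/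
theorem val_descProd_apply {r a n : ℕ} (hb : a + n < r) (x : Fin r) :
    (descProd r (a + n) n x).val =
      if x.val < a ∨ a + n < x.val then x.val else if x.val = a then a + n else x.val - 1 := by
  induction n with
  | zero =>
    change ((1 : Perm (Fin r)) x).val = _
    rw [Perm.one_apply]
    split_ifs <;> omega
  | succ n ih =>
    rw [← add_assoc, descProd_succ, Nat.add_sub_cancel, Perm.mul_apply,
      val_sT_apply (by omega) (by omega), ih (by omega)]
    split_ifs <;> omega

end DescProd

section Factorization

variable {N r : ℕ} {M : Fin N → Fin N → ℕ}

/-- The invariant of the left-to-right evaluation of the product `Π_t`. -/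
structure SortedUpTo (M : Fin N → Fin N → ℕ) (w : Perm (Fin r)) (a : ℕ) : Prop where
  eq_rowMajor : ∀ x : Fin r, x.val < a → w x = rowMajor M r x
  strictMonoOn : StrictMonoOn w {x | a ≤ x.val}

variable (M) in
/-- The number of transpositions in the factor of `w_{i,j}` that moves the point `a` into place. -/
def shift (r a : ℕ) : ℕ :=
  #{y : Fin r | a ≤ y.val ∧ key M y < key M a}

theorem shift_eq_card (a : ℕ) :
    shift M r a = #{y : Fin r | rowIdx M y < rowIdx M a ∧ colIdx M a < colIdx M y} := by
  refine congrArg card (filter_congr fun y _ => ⟨fun ⟨hay, hkey⟩ =>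
    (key_lt_key_iff_of_le M hay).mp hkey, fun h => ?_⟩)
  have hay : a ≤ y.val := by
    by_contra! hya
    exact absurd (colIdx_mono M hya.le) (not_le.mpr h.2)
  exact ⟨hay, (key_lt_key_iff_of_le M hay).mpr h⟩

theorem shift_eq_sum (hc : ptil (colSums M) N = r) (a : ℕ) :
    shift M r a = ∑ p : Fin N × Fin N,
      if p.1.val < rowIdx M a ∧ colIdx M a < p.2.val then M p.1 p.2 else 0 := by
  rw [shift_eq_card, Fintype.sum_prod_type]
  exact card_filter_eq_sum_cells M (fun z => (cellBounds hc z.isLt).rowIdx_lt)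
    (fun z => (cellBounds hc z.isLt).colIdx_lt) (card_cell hc)
    fun k l => k < rowIdx M a ∧ colIdx M a < l

theorem shift_eq_of_mem_cell (hc : ptil (colSums M) N = r) {a i j : ℕ} (hi : i < N)
    (hj : j < N) (h1 : mtil M i (j + 1) ≤ a) (h2 : a < mtil M (i + 1) (j + 1)) :
    shift M r a = sigmaS M i (j + 1) - mtil M i (j + 1) := by
  obtain ⟨hcol, hrow⟩ := colIdx_rowIdx_of_mem_cell M hi hj h1 h2
  rw [shift_eq_sum hc, sigmaS_eq_mtil_add, hcol, hrow]
  omega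

namespace SortedUpTo

variable {w : Perm (Fin r)} {a : ℕ}

theorem le_val_iff (hP : SortedUpTo M w a) (z : Fin r) :
    a ≤ ((rowMajor M r)⁻¹ (w z)).val ↔ a ≤ z.val := by
  by_cases hz : a ≤ z.val
  · refine iff_of_true (not_lt.mp fun hy => ?_) hz
    have h : w _ = w z := (hP.eq_rowMajor _ hy).trans ((rowMajor M r).apply_symm_apply _)
    exact absurd (congrArg Fin.val (w.injective h)) (by omega)
  · rw [hP.eq_rowMajor z (not_le.mp hz)]
    exact iff_of_false (by simpa using hz) hz

theorem val_inv_apply_rowMajor (hP : SortedUpTo M w a) (ha : a < r) :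
    (w⁻¹ (rowMajor M r ⟨a, ha⟩)).val = a + shift M r a := by
  set v := w⁻¹ (rowMajor M r ⟨a, ha⟩)
  have hwv : w v = rowMajor M r ⟨a, ha⟩ := w.apply_symm_apply _
  have hav : a ≤ v.val := (hP.le_val_iff v).mp (by simp [hwv])
  have hcard : #{z : Fin r | a ≤ z.val ∧ z.val < v.val} = shift M r a := by
    refine card_equiv ((rowMajor M r)⁻¹ * w) fun z => ?_
    simp only [mem_filter, mem_univ, true_and, Perm.mul_apply, hP.le_val_iff]
    refine and_congr_right fun haz => ?_
    rw [← Fin.lt_def, ← hP.strictMonoOn.lt_iff_lt haz hav, hwv]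
    simpa using rowMajor_lt_rowMajor_iff M ((rowMajor M r)⁻¹ (w z)) ⟨a, ha⟩
  rw [card_filter_val_mem_Ico v.isLt.le] at hcard
  omega

theorem mul_descProd (hP : SortedUpTo M w a) (ha : a < r) :
    SortedUpTo M (w * descProd r (a + shift M r a) (shift M r a)) (a + 1) := by
  have hv := hP.val_inv_apply_rowMajor ha
  have hD := val_descProd_apply (hv ▸ Fin.isLt _ : a + shift M r a < r)
  refine ⟨fun x hx => ?_, fun x hx y hy hxy => ?_⟩
  · rw [Perm.mul_apply]
    rcases Nat.lt_succ_iff_lt_or_eq.mp hx with hxa | rfl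
    · rw [show descProd r _ _ x = x from Fin.ext (by rw [hD, if_pos (Or.inl hxa)]),
        hP.eq_rowMajor x hxa]
    · rw [show descProd r _ _ x = w⁻¹ (rowMajor M r x) from Fin.ext (by
        rw [hD, if_neg (by omega), if_pos rfl, hv])]
      exact w.apply_symm_apply _
  · have hx : a + 1 ≤ x.val := hx
    have hy : a + 1 ≤ y.val := hy
    have hxy' := Fin.lt_def.mp hxy
    rw [Perm.mul_apply, Perm.mul_apply]
    refine hP.strictMonoOn ?_ ?_ ?_
    · change a ≤ (descProd r _ _ x).val
      rw [hD]
      split_ifs <;> omega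
    · change a ≤ (descProd r _ _ y).val
      rw [hD]
      split_ifs <;> omega
    · rw [Fin.lt_def, hD, hD]
      split_ifs <;> omega

theorem of_shift_eq_zero {A B : ℕ} (hP : SortedUpTo M w A) (hAB : A ≤ B) (hB : B ≤ r)
    (hzero : ∀ a, A ≤ a → a < B → shift M r a = 0) : SortedUpTo M w B := by
  induction B, hAB using Nat.le_induction with
  | base => exact hP
  | succ b hAb ih =>
    have h := (ih (by omega) fun a h1 h2 => hzero a h1 (by omega)).mul_descProd (by omega)
    rwa [hzero b hAb (by omega), show descProd r (b + 0) 0 = 1 from rfl, mul_one] at h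

theorem mul_wE (hc : ptil (colSums M) N = r) {i j : ℕ} (hi : i < N) (hj : j < N)
    (hP : SortedUpTo M w (mtil M i (j + 1))) :
    SortedUpTo M (w * wE r M (i + 1) (j + 1)) (mtil M (i + 1) (j + 1)) := by
  have hent : ent M (i + 1) (j + 1) = M ⟨i, hi⟩ ⟨j, hj⟩ := by
    rw [ent, dif_pos (by omega)]
    rfl
  have hle : mtil M (i + 1) (j + 1) ≤ r :=
    hc ▸ (mtil_le_ptil M hi j).trans (ptil_mono _ hj)
  have hσ := sigmaS_eq_mtil_add M i j
  rw [wE, hent, mtil_succ M hi hj, Nat.add_sub_cancel]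
  have hprefix : ∀ c ≤ M ⟨i, hi⟩ ⟨j, hj⟩, SortedUpTo M (w * ((List.range c).map fun x =>
      descProd r (sigmaS M i (j + 1) + x) (sigmaS M i (j + 1) - mtil M i (j + 1))).prod)
      (mtil M i (j + 1) + c) := by
    intro c hc'
    induction c with
    | zero => simpa using hP
    | succ c ih =>
      have hcell := mtil_succ M hi hj
      have hshift := shift_eq_of_mem_cell hc hi hj (a := mtil M i (j + 1) + c) (by omega)
        (by omega)
      have h := (ih (by omega)).mul_descProd (by omega)
      rw [hshift, show mtil M i (j + 1) + c + (sigmaS M i (j + 1) - mtil M i (j + 1))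
        = sigmaS M i (j + 1) + c by omega] at h
      rwa [List.prod_range_succ, ← mul_assoc]
  exact hprefix _ le_rfl

theorem of_row_zero (hc : ptil (colSums M) N = r) {j : ℕ} (hj : j < N)
    (hP : SortedUpTo M w (mtil M 0 (j + 1))) : SortedUpTo M w (mtil M 1 (j + 1)) := by
  refine hP.of_shift_eq_zero (mtil_mono M _ zero_le_one)
    (hc ▸ (mtil_le_ptil M (by omega) j).trans (ptil_mono _ hj)) fun a h1 h2 => ?_
  have hrow := (colIdx_rowIdx_of_mem_cell M (by omega) hj h1 h2).2
  rw [shift_eq_card, card_eq_zero, filter_eq_empty_iff]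
  intro y _ hy
  omega

theorem mul_colProd (hc : ptil (colSums M) N = r) {j : ℕ} (hj : j < N)
    (hP : SortedUpTo M w (ptil (colSums M) j)) :
    SortedUpTo M (w * colProd r M (j + 1)) (ptil (colSums M) (j + 1)) := by
  rw [← mtil_zero_succ] at hP
  have hprefix : ∀ s ≤ N - 1, SortedUpTo M
      (w * ((List.range s).map fun t => wE r M (t + 2) (j + 1)).prod) (mtil M (s + 1) (j + 1)) := by
    intro s hs
    induction s with
    | zero => simpa using hP.of_row_zero hc hj
    | succ s ih =>
      rw [List.prod_range_succ, ← mul_assoc]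
      exact (ih (by omega)).mul_wE hc (by omega) hj
  have h := hprefix (N - 1) le_rfl
  rwa [Nat.sub_add_cancel (by omega), mtil_self_succ] at h

end SortedUpTo

theorem sortedUpTo_piProd (hc : ptil (colSums M) N = r) {t : ℕ} (ht : t ≤ N) :
    SortedUpTo M (piProd r M t) (ptil (colSums M) t) := by
  induction t with
  | zero =>
    rw [ptil_zero]
    exact ⟨fun _ hx => absurd hx (Nat.not_lt_zero _), fun _ _ _ _ h => h⟩
  | succ t ih =>
    rw [piProd, List.prod_range_succ]
    exact (ih (by omega)).mul_colProd hc (by omega)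

/-- No point of the last column block has to move, which is why `Π_{N-1}` has no factors
`w_{i,N}`. -/
theorem piProd_eq_rowMajor (hc : ptil (colSums M) N = r) : piProd r M (N - 1) = rowMajor M r := by
  have h := (sortedUpTo_piProd hc (Nat.sub_le N 1)).of_shift_eq_zero (B := r)
    (hc ▸ ptil_mono _ (Nat.sub_le N 1)) le_rfl fun a h1 h2 => ?_
  · exact Equiv.ext fun x => h.eq_rowMajor x x.isLt
  have hlast : colIdx M a = N - 1 := by
    have := (cellBounds hc h2).colIdx_lt
    exact colIdx_eq M (by omega) h1 (by rwa [Nat.sub_add_cancel (by omega), hc])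
  rw [shift_eq_card, card_eq_zero, filter_eq_empty_iff]
  intro y _ hy
  have := (cellBounds hc y.isLt).colIdx_lt
  omega

end Factorization

section Length

variable {N r : ℕ} {M : Fin N → Fin N → ℕ}

variable (M) in
def HasCellCounts (w : Perm (Fin r)) : Prop :=
  ∀ k l : Fin N, #{z : Fin r | blockOf (rowSums M) (w z) = k ∧ colIdx M z = l} = M k l

def inversions (w : Perm (Fin r)) : Finset (Fin r × Fin r) :=
  {p | p.1 < p.2 ∧ w p.2 < w p.1}

variable (M) in
/-- The pairs that every permutation with the cell counts of `M` has to invert. -/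
def forcedInversions (w : Perm (Fin r)) : Finset (Fin r × Fin r) :=
  {p | blockOf (rowSums M) (w p.2) < blockOf (rowSums M) (w p.1) ∧ colIdx M p.1 < colIdx M p.2}

theorem forcedInversions_subset (w : Perm (Fin r)) : forcedInversions M w ⊆ inversions w := by
  intro p hp
  simp only [forcedInversions, inversions, mem_filter, mem_univ, true_and] at hp ⊢
  constructor
  · by_contra! h
    exact absurd (colIdx_mono M (Fin.le_def.mp h)) (not_le.mpr hp.2)
  · by_contra! h
    exact absurd (blockOf_mono (rowSums M) h) (not_le.mpr hp.1)

theorem card_forcedInversions (hc : ptil (colSums M) N = r) (hrow : ptil (rowSums M) N = r)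
    {w : Perm (Fin r)} (hw : HasCellCounts M w) :
    #(forcedInversions M w) = ∑ i : Fin N, ∑ j : Fin N,
      M i j * ∑ kk : Fin N, ∑ ll : Fin N, (if kk < i ∧ j < ll then M kk ll else 0) := by
  have hR : ∀ z : Fin r, blockOf (rowSums M) (w z) < N := fun z => (blockOf_spec hrow _).1
  have hC : ∀ z : Fin r, colIdx M z < N := fun z => (cellBounds hc z.isLt).colIdx_lt
  have hfiber : ∀ x : Fin r,
      #{y : Fin r | blockOf (rowSums M) (w y) < blockOf (rowSums M) (w x) ∧
          colIdx M x < colIdx M y}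
        = ∑ kk : Fin N, ∑ ll : Fin N,
          if kk.val < blockOf (rowSums M) (w x) ∧ colIdx M x < ll.val then M kk ll else 0 :=
    fun x => card_filter_eq_sum_cells M hR hC hw fun k l =>
      k < blockOf (rowSums M) (w x) ∧ colIdx M x < l
  rw [forcedInversions, card_filter, Fintype.sum_prod_type]
  simp only [← card_filter, hfiber]
  rw [sum_eq_sum_cells M hR hC hw fun a b => ∑ kk : Fin N, ∑ ll : Fin N,
    if kk.val < a ∧ b < ll.val then M kk ll else 0]
  simp only [Fin.lt_def]

theorem rowBlock_rowMajor (hc : ptil (colSums M) N = r) (z : Fin r) :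
    blockOf (rowSums M) (rowMajor M r z) = rowIdx M z := by
  have hz := cellBounds hc z.isLt
  refine blockOf_eq hz.rowIdx_lt ?_ ?_ <;> rw [val_rowMajor, ← card_rowIdx_lt hc]
  · refine card_le_card fun y hy => ?_
    simp only [mem_filter, mem_univ, true_and] at hy ⊢
    exact (key_lt_key_iff M).mpr (Or.inl hy)
  · refine card_lt_card ((ssubset_iff_of_subset fun y hy => ?_).mpr ⟨z, by simp, by simp⟩)
    simp only [mem_filter, mem_univ, true_and, key_lt_key_iff] at hy ⊢
    omega

theorem hasCellCounts_rowMajor (hc : ptil (colSums M) N = r) :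
    HasCellCounts M (rowMajor M r) := by
  simpa only [HasCellCounts, rowBlock_rowMajor hc] using card_cell hc

theorem clen_rowMajor (hc : ptil (colSums M) N = r) (hrow : ptil (rowSums M) N = r) :
    clen (rowMajor M r) = ∑ i : Fin N, ∑ j : Fin N,
      M i j * ∑ kk : Fin N, ∑ ll : Fin N, (if kk < i ∧ j < ll then M kk ll else 0) := by
  have hsub : inversions (rowMajor M r) ⊆ forcedInversions M (rowMajor M r) := fun p hp => by
    simp only [forcedInversions, inversions, mem_filter, mem_univ, true_and,
      rowMajor_lt_rowMajor_iff, rowBlock_rowMajor hc] at hp ⊢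
    exact (key_lt_key_iff_of_le M (Fin.le_def.mp hp.1.le)).mp hp.2
  rw [← card_forcedInversions hc hrow (hasCellCounts_rowMajor hc),
    ← subset_antisymm hsub (forcedInversions_subset _)]
  rfl

end Length

section MinimalRepresentative

variable {N r : ℕ} {M : Fin N → Fin N → ℕ}

theorem hasCellCounts_of_isDM (hc : ptil (colSums M) N = r) (hrow : ptil (rowSums M) N = r)
    {d : Perm (Fin r)} (hd : isDM r M d) : HasCellCounts M d := by
  intro k l
  rw [← hd.2 k l, ← card_image_of_injective _ d.injective]
  congr 1
  ext u
  simp only [mem_image, mem_filter, mem_univ, true_and, mem_inter, mem_blockSet_iff hrow,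
    mem_blockSet_iff hc, blockOf_colSums]
  constructor
  · rintro ⟨z, ⟨hz1, hz2⟩, rfl⟩
    exact ⟨hz1, z, hz2, rfl⟩
  · rintro ⟨h1, z, hz, rfl⟩
    exact ⟨z, ⟨h1, hz⟩, rfl⟩

/-- `rowMajor` is obtained from `w` by permuting inside the column blocks and then inside the row
blocks. -/
theorem rowMajor_mem_dcoset (hc : ptil (colSums M) N = r) (hrow : ptil (rowSums M) N = r)
    {w : Perm (Fin r)} (hw : HasCellCounts M w) :
    rowMajor M r ∈ dcoset r (rowSums M) (colSums M) w := by
  have hR := fun z : Fin r => (blockOf_spec hrow (w z)).1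
  have hz := fun z : Fin r => cellBounds hc z.isLt
  have hcount : ∀ b : ℕ × ℕ, #{z : Fin r | (blockOf (rowSums M) (w z), colIdx M z) = b}
      = #{z : Fin r | (rowIdx M z, colIdx M z) = b} := fun ⟨k, l⟩ => by
    simp only [Prod.mk.injEq]
    by_cases hkl : k < N ∧ l < N
    · rw [hw ⟨k, hkl.1⟩ ⟨l, hkl.2⟩, card_cell hc ⟨k, hkl.1⟩ ⟨l, hkl.2⟩]
    · have h1 : ∀ z : Fin r, ¬(blockOf (rowSums M) (w z) = k ∧ colIdx M z = l) :=
        fun z h => hkl ⟨h.1 ▸ hR z, h.2 ▸ (hz z).colIdx_lt⟩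
      have h2 : ∀ z : Fin r, ¬(rowIdx M z = k ∧ colIdx M z = l) :=
        fun z h => hkl ⟨h.1 ▸ (hz z).rowIdx_lt, h.2 ▸ (hz z).colIdx_lt⟩
      rw [filter_false_of_mem fun z _ => h1 z, filter_false_of_mem fun z _ => h2 z]
  obtain ⟨e, he⟩ := exists_perm_comp_eq _ _ hcount
  simp only [Prod.mk.injEq] at he
  refine ⟨rowMajor M r * e⁻¹ * w⁻¹, fun z => ?_, e, fun z => (he z).2, by group⟩
  have h := (he (e⁻¹ (w⁻¹ z))).1
  simp only [Perm.coe_inv, Equiv.apply_symm_apply] at h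
  simp only [Perm.mul_apply, rowBlock_rowMajor hc, Perm.coe_inv, ← h]

theorem forcedInversions_eq_of_isMinRep (hc : ptil (colSums M) N = r)
    (hrow : ptil (rowSums M) N = r) {d : Perm (Fin r)} (hd : HasCellCounts M d)
    (hmin : isMinRep r (rowSums M) (colSums M) d) : forcedInversions M d = inversions d :=
  eq_of_subset_of_card_le (forcedInversions_subset d) <| by
    rw [card_forcedInversions hc hrow hd, ← clen_rowMajor hc hrow]
    exact hmin _ (rowMajor_mem_dcoset hc hrow hd)

theorem lt_of_forcedInversions_eq {w : Perm (Fin r)} (hinv : forcedInversions M w = inversions w)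
    {x y : Fin r} (hxy : x < y)
    (h : colIdx M x = colIdx M y ∨ blockOf (rowSums M) (w x) = blockOf (rowSums M) (w y)) :
    w x < w y := by
  refine lt_of_le_of_ne (not_lt.mp fun hyx => ?_) (w.injective.ne hxy.ne)
  have hp : (x, y) ∈ inversions w := by simp [inversions, hxy, hyx]
  rw [← hinv] at hp
  simp only [forcedInversions, mem_filter, mem_univ, true_and] at hp
  omega

theorem rowBlock_lt_and_colIdx_eq_iff (hc : ptil (colSums M) N = r)
    (hrow : ptil (rowSums M) N = r) {w : Perm (Fin r)} (hw : HasCellCounts M w)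
    (hcol : ∀ x y : Fin r, x < y → colIdx M x = colIdx M y → w x < w y) (k : ℕ) {j : ℕ}
    (hj : j < N) (y : Fin r) :
    blockOf (rowSums M) (w y) < k ∧ colIdx M y = j ↔
      ptil (colSums M) j ≤ y ∧ y < mtil M k (j + 1) := by
  have hz := fun z : Fin r => cellBounds hc z.isLt
  set S : Finset (Fin r) := {y : Fin r | blockOf (rowSums M) (w y) < k ∧ colIdx M y = j}
  have hcard : #S = mtil M k (j + 1) - ptil (colSums M) j := by
    rw [card_filter_eq_sum_cells M (fun z => (blockOf_spec hrow (w z)).1)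
      (fun z => (hz z).colIdx_lt) hw fun a b => a < k ∧ b = j, mtil_succ_eq_ptil_add]
    omega
  have hge : ∀ y ∈ S, ptil (colSums M) j ≤ y := fun y hy => by
    obtain ⟨-, -, hy⟩ := mem_filter.mp hy
    exact hy ▸ (hz y).ptil_colIdx_le
  have hdown : ∀ y ∈ S, ∀ y' : Fin r, ptil (colSums M) j ≤ y' → y' ≤ y → y' ∈ S := by
    intro y hy y' h1 h2
    obtain ⟨-, hyk, hyj⟩ := mem_filter.mp hy
    have hy'j : colIdx M y' = j :=
      colIdx_eq M hj h1 ((Fin.le_def.mp h2).trans_lt (hyj ▸ (hz y).lt_ptil_colIdx))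
    refine mem_filter.mpr ⟨mem_univ _, lt_of_le_of_lt ?_ hyk, hy'j⟩
    rcases h2.lt_or_eq with hlt | rfl
    · exact blockOf_mono _ (hcol y' y hlt (hy'j.trans hyj.symm)).le
    · exact le_rfl
  have hmem := mem_iff_of_downwardClosed hge hdown y
  simp only [S, mem_filter, mem_univ, true_and] at hmem
  rw [hmem, hcard, Nat.add_sub_cancel' (ptil_le_mtil M k j)]

theorem rowBlock_eq_rowIdx (hc : ptil (colSums M) N = r) (hrow : ptil (rowSums M) N = r)
    {w : Perm (Fin r)} (hw : HasCellCounts M w)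
    (hcol : ∀ x y : Fin r, x < y → colIdx M x = colIdx M y → w x < w y) (z : Fin r) :
    blockOf (rowSums M) (w z) = rowIdx M z := by
  have hz := cellBounds hc z.isLt
  have hiff := fun k => rowBlock_lt_and_colIdx_eq_iff hc hrow hw hcol k hz.colIdx_lt z
  have h1 := (hiff (rowIdx M z + 1)).mpr ⟨hz.ptil_colIdx_le, hz.lt_mtil_rowIdx⟩
  have h2 := mt (hiff (rowIdx M z)).mp (by have := hz.mtil_rowIdx_le; omega)
  omega

theorem eq_rowMajor_of_forcedInversions_eq (hc : ptil (colSums M) N = r)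
    (hrow : ptil (rowSums M) N = r) {w : Perm (Fin r)} (hw : HasCellCounts M w)
    (hinv : forcedInversions M w = inversions w) : w = rowMajor M r := by
  have hrowIdx := rowBlock_eq_rowIdx hc hrow hw fun x y hxy h =>
    lt_of_forcedInversions_eq hinv hxy (Or.inl h)
  refine eq_rowMajor_of_lt M fun x y hxy => ?_
  rcases (key_lt_key_iff M).mp hxy with hlt | ⟨heq, hlt | ⟨hcol, hlt⟩⟩
  · rw [← hrowIdx, ← hrowIdx] at hlt
    exact not_le.mp fun hyx => absurd (blockOf_mono _ hyx) (not_le.mpr hlt)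
  · have hxy' : x < y := Fin.lt_def.mpr <| not_le.mp fun hyx =>
      absurd (colIdx_mono M hyx) (not_le.mpr hlt)
    rw [← hrowIdx, ← hrowIdx] at heq
    exact lt_of_forcedInversions_eq hinv hxy' (Or.inr heq)
  · exact lt_of_forcedInversions_eq hinv (Fin.lt_def.mpr hlt) (Or.inl hcol)

theorem eq_rowMajor_of_isDM (hc : ptil (colSums M) N = r) (hrow : ptil (rowSums M) N = r)
    {d : Perm (Fin r)} (hd : isDM r M d) : d = rowMajor M r :=
  have hcount := hasCellCounts_of_isDM hc hrow hd
  eq_rowMajor_of_forcedInversions_eq hc hrow hcount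
    (forcedInversions_eq_of_isMinRep hc hrow hcount hd.1)

end MinimalRepresentative

end MatrixDoubleCoset

theorem stmt10_general (N r : ℕ) (M : Fin N → Fin N → ℕ)
    (hMr : ∑ i, ∑ j, M i j = r)
    (dM : Equiv.Perm (Fin r)) (hdM : isDM r M dM) :
    dM = piProd r M (N - 1) ∧
    clen dM = ∑ i : Fin N, ∑ j : Fin N,
      M i j * ∑ kk : Fin N, ∑ ll : Fin N, (if kk < i ∧ j < ll then M kk ll else 0) := by
  have hc := MatrixDoubleCoset.ptil_colSums_self M hMr
  have hrow := MatrixDoubleCoset.ptil_rowSums_self M hMr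
  rw [MatrixDoubleCoset.eq_rowMajor_of_isDM hc hrow hdM,
    MatrixDoubleCoset.piProd_eq_rowMajor hc]
  exact ⟨rfl, MatrixDoubleCoset.clen_rowMajor hc hrow⟩

/-- Lemma `d_M`, first part.  `d_M` equals the column-by-column
product `(w_{2,1} ⋯ w_{N,1})(w_{2,2} ⋯ w_{N,2}) ⋯ (w_{2,N-1} ⋯ w_{N,N-1})`, and this
expression is reduced; in particular
`ℓ(d_M) = Σ_{i,j} m_{i,j} · (Σ_{k<i, l>j} m_{k,l})`. -/
theorem stmt10 (N r : ℕ) (hN : 2 ≤ N) (M : Fin N → Fin N → ℕ)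
    (hMr : ∑ i, ∑ j, M i j = r)
    (dM : Equiv.Perm (Fin r)) (hdM : isDM r M dM) :
    dM = piProd r M (N - 1) ∧
    clen dM = ∑ i : Fin N, ∑ j : Fin N,
      M i j * ∑ kk : Fin N, ∑ ll : Fin N, (if kk < i ∧ j < ll then M kk ll else 0) :=
  stmt10_general N r M hMr dM hdM
end

section
/- Let N ≥ 2, M = (m_{i,j}) ∈ M(N,r), and fix 1 ≤ h < N and 1 ≤ k ≤ N with m_{h+1,k} ≥ 1. Then ℓ(d_{M⁺_{h,k}}) = ℓ(d_M) + Σ_{j<k} m_{h+1,j} − Σ_{j>k} m_{h,j}. -/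
/-!
Since `d = d_M` is the shortest element of its double coset, it is increasing on each block of
`co M` and `d⁻¹` is increasing on each block of `ro M`: an inversion inside a block would contain
an adjacent one, which an adjacent transposition of the Young subgroup removes, shortening `d`.
So the inversions of `d_M` are exactly the pairs of points lying in entries `(i, j)`, `(i', j')`
of `M` with `i' < i` and `j < j'`, and `ℓ(d_M) = Σ m_{i,j} m_{i',j'}` over such pairs of entries.
This is a quadratic form in `M` that vanishes on pairs of entries of one column; moving a unit
from `(h+1, k)` to `(h, k)` therefore changes it by its linear part, which counts the entries of
row `h+1` west of `k` minus those of row `h` east of `k`.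
-/

open Equiv Finset

section Blocks

variable {r N : ℕ} (lam : Fin N → ℕ)

lemma ptil_mono : Monotone (ptil lam) := fun _ _ hij =>
  Finset.sum_le_sum fun l _ => by split_ifs <;> omega

lemma ptil_of_le {i : ℕ} (hi : N ≤ i) : ptil lam i = ∑ l, lam l :=
  Finset.sum_congr rfl fun l _ => if_pos (by omega)

lemma ptil_zero : ptil lam 0 = 0 := by simp [ptil]

lemma blockOf_mono : Monotone (blockOf (r := r) lam) := fun _ _ hab =>
  Finset.card_le_card <| Finset.monotone_filter_right _ fun _ _ h => le_trans h hab

lemma blockOf_eq_of_le_of_lt {x : Fin r} {i : ℕ} (h1 : ptil lam i ≤ x)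
    (h2 : x < ptil lam (i + 1)) :
    blockOf lam x = i := by
  have hiN : i < N := by
    by_contra! hNi
    rw [ptil_of_le lam hNi, ptil_of_le lam (by omega)] at *
    omega
  have : (Finset.range N).filter (fun j => ptil lam (j + 1) ≤ x) = Finset.range i := by
    ext j
    simp only [Finset.mem_filter, Finset.mem_range]
    constructor
    · rintro ⟨-, hj⟩
      by_contra! hij
      have := ptil_mono lam (show i + 1 ≤ j + 1 by omega)
      omega
    · intro hj
      have := ptil_mono lam (show j + 1 ≤ i by omega)
      exact ⟨by omega, by omega⟩
  rw [blockOf, this, Finset.card_range]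

variable {lam}

lemma blockOf_eq_iff (hr : ∑ l, lam l = r) (x : Fin r) (i : ℕ) :
    blockOf lam x = i ↔ ptil lam i ≤ x ∧ x < ptil lam (i + 1) := by
  refine ⟨?_, fun h => blockOf_eq_of_le_of_lt lam h.1 h.2⟩
  have hex : ∃ n, x < ptil lam n := ⟨N, by rw [ptil_of_le lam le_rfl, hr]; exact x.isLt⟩
  obtain ⟨n, hn⟩ : ∃ n, Nat.find hex = n + 1 := Nat.exists_eq_add_one.mpr <|
    Nat.pos_of_ne_zero fun h0 => by simpa [h0, ptil_zero] using Nat.find_spec hex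
  have hle : ptil lam n ≤ x := not_lt.mp (Nat.find_min hex (by omega))
  have hlt : x < ptil lam (n + 1) := hn ▸ Nat.find_spec hex
  rintro rfl
  rw [blockOf_eq_of_le_of_lt lam hle hlt]
  exact ⟨hle, hlt⟩

lemma blockOf_lt (hr : ∑ l, lam l = r) (x : Fin r) : blockOf lam x < N := by
  by_contra! hNx
  have := ((blockOf_eq_iff hr x _).mp rfl).1
  rw [ptil_of_le lam hNx, hr] at this
  exact absurd x.isLt (by omega)

lemma mem_blockSet_iff (hr : ∑ l, lam l = r) (x : Fin r) (i : ℕ) :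
    x ∈ blockSet r lam (i + 1) ↔ blockOf lam x = i := by
  simp [blockSet, blockOf_eq_iff hr]

lemma swap_mem_young {a b : Fin r} (h : blockOf lam a = blockOf lam b) :
    swap a b ∈ young r lam := by
  intro x
  rcases eq_or_ne x a with rfl | hxa
  · rw [swap_apply_left]; exact h.symm
  rcases eq_or_ne x b with rfl | hxb
  · rw [swap_apply_right]; exact h
  · rw [swap_apply_of_ne_of_ne hxa hxb]

end Blocks

section Length

variable {r : ℕ}

lemma clen_inv (w : Perm (Fin r)) : clen w⁻¹ = clen w := by
  rw [clen, clen]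
  refine Finset.card_nbij' (fun p => (w⁻¹ p.2, w⁻¹ p.1)) (fun p => (w p.2, w p.1)) ?_ ?_ ?_ ?_
  · rintro ⟨a, b⟩ h
    simp only [Finset.mem_coe, Finset.mem_filter, Finset.mem_univ, true_and] at h ⊢
    exact ⟨h.2, by simpa using h.1⟩
  · rintro ⟨a, b⟩ h
    simp only [Finset.mem_coe, Finset.mem_filter, Finset.mem_univ, true_and] at h ⊢
    exact ⟨by simpa using h.2, by simpa using h.1⟩
  · intro p _; simp
  · intro p _; simp

lemma swap_lt_swap_of_succ {x y a b : Fin r} (hxy : y.val = x.val + 1) (hab : a < b)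
    (hne : (a, b) ≠ (x, y)) : swap x y a < swap x y b := by
  have hval : ∀ z : Fin r,
      (swap x y z).val = if z = x then y.val else if z = y then x.val else z.val := by
    intro z
    rw [swap_apply_def]
    split_ifs <;> rfl
  rw [Fin.lt_def, hval, hval]
  simp only [ne_eq, Prod.mk.injEq, Fin.ext_iff, Fin.lt_def] at hab hne ⊢
  split_ifs <;> omega

lemma clen_mul_swap_of_succ (w : Perm (Fin r)) {x y : Fin r} (hxy : y.val = x.val + 1)
    (hw : w y < w x) : clen (w * swap x y) + 1 = clen w := by
  have hxy' : x < y := by rw [Fin.lt_def]; omega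
  have hmem :
      (x, y) ∈ Finset.univ.filter (fun p : Fin r × Fin r => p.1 < p.2 ∧ w p.2 < w p.1) := by
    simpa using ⟨hxy', hw⟩
  rw [clen, clen, ← Finset.card_erase_add_one hmem]
  congr 1
  refine Finset.card_nbij' (fun p => (swap x y p.1, swap x y p.2))
    (fun p => (swap x y p.1, swap x y p.2)) ?_ ?_ ?_ ?_
  · rintro ⟨a, b⟩ h
    rw [Finset.mem_coe, Finset.mem_filter] at h
    obtain ⟨-, hab, hwab⟩ := h
    have hne : (a, b) ≠ (x, y) := by
      rintro ⟨⟩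
      simp only [Perm.mul_apply, swap_apply_left, swap_apply_right] at hwab
      exact absurd hw (asymm hwab)
    simp only [Finset.mem_coe, Finset.mem_erase, Finset.mem_filter, Finset.mem_univ, true_and,
      ne_eq, Prod.mk.injEq]
    refine ⟨?_, swap_lt_swap_of_succ hxy hab hne, by simpa using hwab⟩
    rintro ⟨hx, hy⟩
    rw [swap_apply_eq_iff, swap_apply_left] at hx
    rw [swap_apply_eq_iff, swap_apply_right] at hy
    exact absurd (hx ▸ hy ▸ hab) (asymm hxy')
  · rintro ⟨a, b⟩ h
    simp only [Finset.mem_coe, Finset.mem_erase, Finset.mem_filter, Finset.mem_univ,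
      true_and] at h
    obtain ⟨hne, hab, hwab⟩ := h
    rw [Finset.mem_coe, Finset.mem_filter]
    simpa using ⟨swap_lt_swap_of_succ hxy hab hne, hwab⟩
  · intro p _; simp
  · intro p _; simp

lemma exists_succ_descent (w : Perm (Fin r)) {a b : Fin r} (hab : a < b) (hw : w b < w a) :
    ∃ x y : Fin r, y.val = x.val + 1 ∧ a ≤ x ∧ y ≤ b ∧ w y < w x := by
  by_contra! hno
  have key : ∀ n (hn : a.val + n < r), a.val + n ≤ b.val → w a ≤ w ⟨a.val + n, hn⟩ := by
    intro n
    induction n with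
    | zero => intro _ _; rfl
    | succ n ih =>
      intro hn hnb
      refine (ih (by omega) (by omega)).trans (hno _ _ ?_ ?_ ?_) <;> simp [Fin.le_def] <;> omega
  have hab' := key (b.val - a.val) (by omega) (by omega)
  rw [show (⟨a.val + (b.val - a.val), _⟩ : Fin r) = b from Fin.ext (by simp; omega)] at hab'
  exact absurd hw (not_lt.mpr hab')

end Length

section MinRep

variable {r N : ℕ} {lam mu : Fin N → ℕ} {d : Perm (Fin r)}

lemma isMinRep.inv (hd : isMinRep r lam mu d) : isMinRep r mu lam d⁻¹ := by
  rintro _ ⟨x, hx, y, hy, rfl⟩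
  rw [clen_inv, ← clen_inv (x * d⁻¹ * y)]
  exact hd _ ⟨y⁻¹, inv_mem hy, x⁻¹, inv_mem hx, by group⟩

lemma isMinRep.blockOf_ne_of_lt (hd : isMinRep r lam mu d) {a b : Fin r} (hab : a < b)
    (hdab : d b < d a) : blockOf mu a ≠ blockOf mu b := by
  intro hblock
  obtain ⟨x, y, hxy, hax, hyb, hdxy⟩ := exists_succ_descent d hab hdab
  have hxy_block : blockOf mu x = blockOf mu y := by
    refine le_antisymm (blockOf_mono mu (by rw [Fin.le_def]; omega)) ?_
    calc blockOf mu y ≤ blockOf mu b := blockOf_mono mu hyb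
      _ = blockOf mu a := hblock.symm
      _ ≤ blockOf mu x := blockOf_mono mu hax
  have hmem : d * swap x y ∈ dcoset r lam mu d :=
    ⟨1, one_mem _, swap x y, swap_mem_young hxy_block, by rw [one_mul]⟩
  have := hd _ hmem
  have := clen_mul_swap_of_succ d hxy hdxy
  omega

lemma isMinRep.blockOf_lt_of_lt (hd : isMinRep r lam mu d) {a b : Fin r} (hab : a < b)
    (hdab : d b < d a) : blockOf mu a < blockOf mu b ∧ blockOf lam (d b) < blockOf lam (d a) := by
  refine ⟨(blockOf_mono mu hab.le).lt_of_ne (hd.blockOf_ne_of_lt hab hdab),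
    (blockOf_mono lam hdab.le).lt_of_ne (hd.inv.blockOf_ne_of_lt hdab ?_)⟩
  simpa using hab

lemma isMinRep.clen_eq_card (hd : isMinRep r lam mu d) :
    clen d = #{p : Fin r × Fin r |
      blockOf mu p.1 < blockOf mu p.2 ∧ blockOf lam (d p.2) < blockOf lam (d p.1)} := by
  refine congrArg Finset.card <| Finset.filter_congr fun p _ =>
    ⟨fun h => hd.blockOf_lt_of_lt h.1 h.2, fun h => ⟨?_, ?_⟩⟩
  · by_contra! hp
    exact absurd h.1 (not_lt.mpr (blockOf_mono mu hp))
  · by_contra! hp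
    exact absurd h.2 (not_lt.mpr (blockOf_mono lam hp))

end MinRep

section Counting

variable {α β : Type*} [Fintype α] [Fintype β] [DecidableEq β]

lemma sum_comp_eq_sum_card_fiber_mul (f : α → β) (φ : β → ℕ) :
    ∑ a, φ (f a) = ∑ p, #{a | f a = p} * φ p := by
  rw [← Finset.sum_fiberwise' Finset.univ f φ]
  simp

lemma card_filter_comp_prod (f : α → β) (R : β → β → Prop) [DecidableRel R] :
    #{ab : α × α | R (f ab.1) (f ab.2)} =
      ∑ p, ∑ q, if R p q then #{a | f a = p} * #{a | f a = q} else 0 := by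
  rw [Finset.card_filter, Fintype.sum_prod_type]
  rw [Finset.sum_congr rfl fun a _ =>
    sum_comp_eq_sum_card_fiber_mul f (fun q => if R (f a) q then 1 else 0)]
  rw [sum_comp_eq_sum_card_fiber_mul f (fun p => ∑ q, #{a | f a = q} * if R p q then 1 else 0)]
  simp_rw [Finset.mul_sum]
  refine Finset.sum_congr rfl fun p _ => Finset.sum_congr rfl fun q _ => ?_
  split_ifs <;> ring

end Counting

lemma isDM.clen_eq {r N : ℕ} {M : Fin N → Fin N → ℕ} {d : Perm (Fin r)}
    (hMr : ∑ i, ∑ j, M i j = r) (hd : isDM r M d) :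
    clen d = ∑ p : Fin N × Fin N, ∑ q : Fin N × Fin N,
      if q.1 < p.1 ∧ p.2 < q.2 then M p.1 p.2 * M q.1 q.2 else 0 := by
  have hrow : ∑ i, rowSums M i = r := hMr
  have hcol : ∑ j, colSums M j = r := by rw [← hMr, Finset.sum_comm]; rfl
  let f : Fin r → Fin N × Fin N := fun a =>
    (⟨blockOf (rowSums M) (d a), blockOf_lt hrow _⟩,
      ⟨blockOf (colSums M) a, blockOf_lt hcol a⟩)
  have hfiber : ∀ p, #{a | f a = p} = M p.1 p.2 := by
    intro p
    rw [← hd.2 p.1 p.2, ← Finset.card_image_of_injective _ d.injective]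
    congr 1
    ext y
    simp only [Finset.mem_image, Finset.mem_filter, Finset.mem_univ, true_and, Finset.mem_inter,
      mem_blockSet_iff hrow, mem_blockSet_iff hcol, f, Prod.ext_iff, Fin.ext_iff]
    constructor
    · rintro ⟨a, ⟨hi, hj⟩, hay⟩
      obtain rfl : d a = y := Fin.ext hay
      exact ⟨hi, a, hj, rfl⟩
    · rintro ⟨hi, a, hj, hay⟩
      obtain rfl : d a = y := Fin.ext hay
      exact ⟨a, ⟨hi, hj⟩, rfl⟩
  rw [hd.1.clen_eq_card]
  calc _ = #{ab : Fin r × Fin r | (f ab.2).1 < (f ab.1).1 ∧ (f ab.1).2 < (f ab.2).2} :=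
        congrArg Finset.card (Finset.filter_congr fun _ _ => by simp only [f, Fin.lt_def]; tauto)
    _ = _ := by
      rw [card_filter_comp_prod f (fun p q => q.1 < p.1 ∧ p.2 < q.2)]
      simp_rw [hfiber]

lemma sum_mul_mul_add_single_sub_single {ι R : Type*} [Fintype ι] [DecidableEq ι] [CommRing R]
    (χ : ι → ι → R) (A B : ι → R) {u v : ι} (hB : B = A + Pi.single u 1 - Pi.single v 1)
    (hχ : ∀ p ∈ ({u, v} : Set ι), ∀ q ∈ ({u, v} : Set ι), χ p q = 0) :
    ∑ p, ∑ q, χ p q * B p * B q =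
      ∑ p, ∑ q, χ p q * A p * A q + ∑ p, (χ p u - χ p v + (χ u p - χ v p)) * A p := by
  have huu := hχ u (by simp) u (by simp)
  have huv := hχ u (by simp) v (by simp)
  have hvu := hχ v (by simp) u (by simp)
  have hvv := hχ v (by simp) v (by simp)
  simp only [hB, Pi.add_apply, Pi.sub_apply, Pi.single_apply, mul_add, add_mul, mul_sub, sub_mul,
    Finset.sum_add_distrib, Finset.sum_sub_distrib, mul_ite, ite_mul, mul_one, mul_zero, zero_mul,
    Finset.sum_ite_irrel, Finset.sum_const_zero, Finset.sum_ite_eq', Finset.mem_univ, if_true,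
    huu, huv, hvu, hvv]
  ring

def southWestInd {N : ℕ} (p q : Fin N × Fin N) : ℤ := if q.1 < p.1 ∧ p.2 < q.2 then 1 else 0

lemma isDM.natCast_clen_eq {r N : ℕ} {M : Fin N → Fin N → ℕ} {d : Perm (Fin r)}
    (hMr : ∑ i, ∑ j, M i j = r) (hd : isDM r M d) :
    (clen d : ℤ) = ∑ p, ∑ q, southWestInd p q * (M p.1 p.2 : ℤ) * M q.1 q.2 := by
  rw [hd.clen_eq hMr]
  push_cast
  simp only [southWestInd, ite_mul, one_mul, zero_mul]

lemma sum_southWestInd_sub_mul {N : ℕ} (A : Fin N × Fin N → ℤ) {i i' : Fin N}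
    (hi : i'.val = i.val + 1) (k : Fin N) :
    ∑ p, (southWestInd p (i, k) - southWestInd p (i', k) +
        (southWestInd (i, k) p - southWestInd (i', k) p)) * A p =
      ∑ j : Fin N, (if j.val < k.val then A (i', j) else 0) -
        ∑ j : Fin N, (if k.val < j.val then A (i, j) else 0) := by
  have hχ : ∀ p : Fin N × Fin N, southWestInd p (i, k) - southWestInd p (i', k) +
      (southWestInd (i, k) p - southWestInd (i', k) p) =
      (if p.1 = i' ∧ p.2.val < k.val then 1 else 0) -
        (if p.1 = i ∧ k.val < p.2.val then 1 else 0) := by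
    intro p
    simp only [southWestInd, Fin.lt_def, Fin.ext_iff]
    split_ifs <;> omega
  simp only [hχ, sub_mul, ite_mul, one_mul, zero_mul, Finset.sum_sub_distrib,
    Fintype.sum_prod_type, ite_and, Finset.sum_ite_irrel, Finset.sum_const_zero,
    Finset.sum_ite_eq', Finset.mem_univ, if_true]

lemma sum_sum_eq_of_natCast_eq_add_single_sub_single {N : ℕ} {A B : Fin N → Fin N → ℕ}
    {u v : Fin N × Fin N} (hAB : (fun p : Fin N × Fin N => (A p.1 p.2 : ℤ)) =
      (fun p => (B p.1 p.2 : ℤ)) + Pi.single u 1 - Pi.single v 1) :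
    ∑ i, ∑ j, A i j = ∑ i, ∑ j, B i j := by
  have hsum : ∑ p : Fin N × Fin N, (A p.1 p.2 : ℤ) =
      ∑ p : Fin N × Fin N, (B p.1 p.2 : ℤ) := by
    simp only [congrFun hAB, Pi.add_apply, Pi.sub_apply, Finset.sum_add_distrib,
      Finset.sum_sub_distrib, Finset.sum_pi_single', Finset.mem_univ, if_true, add_sub_cancel_right]
  simp only [Fintype.sum_prod_type] at hsum
  exact_mod_cast hsum

/-- Rows `h`, `h + 1` and the column `k` are 0-based. -/
theorem stmt11 (N r : ℕ) (M : Fin N → Fin N → ℕ)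
    (hMr : ∑ i, ∑ j, M i j = r)
    (h : ℕ) (hh : h + 1 < N) (k : Fin N) (hk : 1 ≤ M ⟨h + 1, hh⟩ k)
    (MP : Fin N → Fin N → ℕ)
    (hMPdef : ∀ i j : Fin N, MP i j =
      if i.val = h ∧ j = k then M i j + 1
      else if i.val = h + 1 ∧ j = k then M i j - 1 else M i j)
    (dM dP : Equiv.Perm (Fin r)) (hdM : isDM r M dM) (hdP : isDM r MP dP) :
    (clen dP : ℤ) = (clen dM : ℤ)
      + ∑ j : Fin N, (if j.val < k.val then (M ⟨h + 1, hh⟩ j : ℤ) else 0)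
      - ∑ j : Fin N, (if k.val < j.val then (M ⟨h, by omega⟩ j : ℤ) else 0) := by
  set u : Fin N × Fin N := (⟨h, by omega⟩, k)
  set v : Fin N × Fin N := (⟨h + 1, hh⟩, k)
  have hMP : (fun p : Fin N × Fin N => (MP p.1 p.2 : ℤ)) =
      (fun p => (M p.1 p.2 : ℤ)) + Pi.single u 1 - Pi.single v 1 := by
    ext ⟨i, j⟩
    rw [hMPdef]
    simp only [u, v, Pi.add_apply, Pi.sub_apply, Pi.single_apply, Prod.mk.injEq, Fin.ext_iff]
    split_ifs with hu hv hv
    · omega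
    · push_cast; ring
    · obtain ⟨rfl, rfl⟩ : i = ⟨h + 1, hh⟩ ∧ j = k := ⟨Fin.ext hv.1, Fin.ext hv.2⟩
      rw [Nat.cast_sub hk]
      ring
    · ring
  have hMPr : ∑ i, ∑ j, MP i j = r := hMr ▸ sum_sum_eq_of_natCast_eq_add_single_sub_single hMP
  have hχ : ∀ p ∈ ({u, v} : Set _), ∀ q ∈ ({u, v} : Set _), southWestInd p q = 0 := by
    rintro p (rfl | rfl) q (rfl | rfl) <;> simp [southWestInd, u, v]
  rw [hdP.natCast_clen_eq hMPr, hdM.natCast_clen_eq hMr,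
    sum_mul_mul_add_single_sub_single southWestInd _ _ hMP hχ,
    sum_southWestInd_sub_mul _ rfl]
  ring
end

section
/- Let N ≥ 2, M = (m_{i,j}) ∈ M(N,r), and fix 1 ≤ j ≤ N−1 and 2 ≤ h ≤ N. Then the partial column product w_{2,j} w_{3,j} ⋯ w_{h,j} fixes every element of {1,…,r} that is greater than σ_{h−1,j} + m_{h,j}. -/
open Equiv Finset

/-!
The factor `w_{i,j}` is a product of simple transpositions `s_k` with
`k < σ_{i-1,j} + m_{i,j}`, so it fixes every label above `σ_{i-1,j} + m_{i,j}`.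
This bound increases with `i`, because `σ_{i,j} ≥ σ_{i-1,j} + m_{i,j}` and `σ_{i,j}` is
monotone in `i`; hence every factor `w_{2,j}, …, w_{h,j}` fixes the labels above
`σ_{h-1,j} + m_{h,j}`.
-/

lemma Equiv.Perm.list_prod_apply_eq_self {α : Type*} {l : List (Perm α)} {x : α}
    (h : ∀ w ∈ l, w x = x) : l.prod x = x :=
  MulAction.mem_stabilizer_iff.1 <| Subgroup.list_prod_mem (K := MulAction.stabilizer _ x)
    fun w hw => MulAction.mem_stabilizer_iff.2 (h w hw)

lemma sT_apply_of_lt {r k : ℕ} {x : Fin r} (hk : k < x.val) : sT r k x = x := by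
  unfold sT
  split
  · exact swap_apply_of_ne_of_ne (Fin.ne_of_val_ne (show x.val ≠ k - 1 by omega))
      (Fin.ne_of_val_ne (show x.val ≠ k by omega))
  · rfl

lemma descProd_apply_of_lt {r b : ℕ} (n : ℕ) {x : Fin r} (hb : b < x.val) :
    descProd r b n x = x :=
  Equiv.Perm.list_prod_apply_eq_self fun w hw => by
    obtain ⟨t, -, rfl⟩ := List.mem_map.1 hw
    exact sT_apply_of_lt (by omega)

lemma wE_apply_of_le {r N : ℕ} (M : Fin N → Fin N → ℕ) {i j : ℕ} {x : Fin r}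
    (hx : sigmaS M (i - 1) j + ent M i j ≤ x.val) : wE r M i j x = x :=
  Equiv.Perm.list_prod_apply_eq_self fun w hw => by
    obtain ⟨t, ht, rfl⟩ := List.mem_map.1 hw
    exact descProd_apply_of_lt _ (by rw [List.mem_range] at ht; omega)

/-- Out of range both sides vanish, since no index `p` satisfies the condition. -/
lemma ent_eq_sum {N : ℕ} (M : Fin N → Fin N → ℕ) (i j : ℕ) :
    ent M i j =
      ∑ p : Fin N × Fin N, if p.1.val + 1 = i ∧ p.2.val + 1 = j then M p.1 p.2 else 0 := by
  unfold ent
  split_ifs with hrange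
  · rw [Finset.sum_eq_single (⟨i - 1, by omega⟩, ⟨j - 1, by omega⟩)]
    · simp only [if_pos (show i - 1 + 1 = i ∧ j - 1 + 1 = j by omega)]
    · intro p _ hp
      rw [if_neg]
      rintro ⟨h1, h2⟩
      exact hp (Prod.ext (Fin.ext (show p.1.val = i - 1 by omega))
        (Fin.ext (show p.2.val = j - 1 by omega)))
    · simp
  · refine (Finset.sum_eq_zero fun p _ => if_neg ?_).symm
    have := p.1.isLt
    have := p.2.isLt
    omega

lemma sigmaS_mono {N : ℕ} (M : Fin N → Fin N → ℕ) (j : ℕ) : Monotone (sigmaS M · j) := by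
  intro i i' hii'
  show sigmaS M i j ≤ sigmaS M i' j
  unfold sigmaS
  gcongr with p
  split_ifs <;> omega

lemma sigmaS_sub_one_add_ent_le {N : ℕ} (M : Fin N → Fin N → ℕ) (i j : ℕ) :
    sigmaS M (i - 1) j + ent M i j ≤ sigmaS M i j := by
  unfold sigmaS
  rw [ent_eq_sum, add_assoc, ← Finset.sum_add_distrib]
  gcongr with p
  split_ifs <;> omega

lemma sigmaS_sub_one_add_ent_mono {N : ℕ} (M : Fin N → Fin N → ℕ) (j : ℕ) :
    Monotone (fun i => sigmaS M (i - 1) j + ent M i j) := by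
  intro i k hik
  rcases hik.eq_or_lt with rfl | hlt
  · exact le_rfl
  · calc sigmaS M (i - 1) j + ent M i j ≤ sigmaS M i j := sigmaS_sub_one_add_ent_le M i j
      _ ≤ sigmaS M (k - 1) j := sigmaS_mono M j (by omega)
      _ ≤ sigmaS M (k - 1) j + ent M k j := Nat.le_add_right _ _

theorem stmt16_general (N r : ℕ) (M : Fin N → Fin N → ℕ)
    (j h : ℕ) :
    ∀ x : Fin r, sigmaS M (h - 1) j + ent M h j < x.val + 1 →
      (((List.range (h - 1)).map (fun t => wE r M (t + 2) j)).prod) x = x := by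
  intro x hx
  refine Equiv.Perm.list_prod_apply_eq_self fun w hw => ?_
  obtain ⟨t, ht, rfl⟩ := List.mem_map.1 hw
  rw [List.mem_range] at ht
  have hbound := sigmaS_sub_one_add_ent_mono M j (show t + 2 ≤ h by omega)
  exact wE_apply_of_le M (by simp only at hbound; omega)

/-- Remark `dmw`(2), last assertion.  For `1 ≤ j ≤ N-1` and
`2 ≤ h ≤ N` (1-based), the partial column product `w_{2,j} w_{3,j} ⋯ w_{h,j}` fixes every
point whose label exceeds `σ_{h-1,j} + m_{h,j}`. -/
theorem stmt16 (N r : ℕ) (hN : 2 ≤ N) (M : Fin N → Fin N → ℕ)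
    (hMr : ∑ i, ∑ j, M i j = r)
    (j h : ℕ) (hj1 : 1 ≤ j) (hjN : j ≤ N - 1) (hh2 : 2 ≤ h) (hhN : h ≤ N) :
    ∀ x : Fin r, sigmaS M (h - 1) j + ent M h j < x.val + 1 →
      (((List.range (h - 1)).map (fun t => wE r M (t + 2) j)).prod) x = x :=
  stmt16_general N r M j h
end
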